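/- arXiv:2009.05855 — 2 statements merged into one kernel-verified Lean document; each statement's English description precedes it below -/
import Mathlib

section
/- Let G be a Polish group and let (H_x)_{x∈ℝ} be an analytic independent generating family of subgroups of G. Then only finitely many x ∈ ℝ satisfy that H_x is uncountable. -/
/-!
Let `W = ⋃ₓ H_x`. Since `W` is symmetric and generates `G`, the analytic sets `Wⁿ` cover `G`,
so by Baire one of them is nonmeagre. Analytic sets have the Baire property, so Pettis' theorem
makes `W²ⁿ` a neighbourhood of `1`; choose `U ∋ 1` with `U²ⁿ⁺¹ ⊆ W²ⁿ`. If infinitely many `H_x`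
were uncountable, pick `2n + 1` of them and in each a nontrivial element of `U`. Their product
lies in `W²ⁿ`, i.e. in the span of at most `2n` of the `H_y`, and independence forces every one
of the `2n + 1` indices to be among these `y`.
-/

open Set Filter Topology Pointwise MeasureTheory PiNat

section BaireHull

variable {X : Type*} [TopologicalSpace X]

def meagreLocus (s : Set X) : Set X := ⋃₀ {U | IsOpen U ∧ IsMeagre (s ∩ U)}

lemma isOpen_meagreLocus (s : Set X) : IsOpen (meagreLocus s) :=
  isOpen_sUnion fun _ hU => hU.1

lemma isMeagre_inter_meagreLocus [SecondCountableTopology X] (s : Set X) :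
    IsMeagre (s ∩ meagreLocus s) := by
  obtain ⟨T, hTc, hTS, hT⟩ := TopologicalSpace.isOpen_sUnion_countable
    {U | IsOpen U ∧ IsMeagre (s ∩ U)} fun _ hU => hU.1
  rw [meagreLocus, ← hT, sUnion_eq_biUnion, inter_iUnion₂]
  exact isMeagre_biUnion hTc fun U hU => (hTS hU).2

lemma subset_meagreLocus {s U : Set X} (hU : IsOpen U) (hsU : IsMeagre (s ∩ U)) :
    U ⊆ meagreLocus s :=
  subset_sUnion_of_mem ⟨hU, hsU⟩

def baireHull (s : Set X) : Set X := s ∪ (meagreLocus s)ᶜ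

lemma subset_baireHull (s : Set X) : s ⊆ baireHull s := subset_union_left

lemma baireHull_subset_closure (s : Set X) : baireHull s ⊆ closure s := by
  refine union_subset subset_closure (compl_subset_comm.1 ?_)
  refine subset_meagreLocus isClosed_closure.isOpen_compl ?_
  exact IsMeagre.empty.mono fun x hx => hx.2 (subset_closure hx.1)

lemma baireMeasurableSet_baireHull [SecondCountableTopology X] (s : Set X) :
    BaireMeasurableSet (baireHull s) := by
  have : baireHull s = (meagreLocus s)ᶜ ∪ (s ∩ meagreLocus s) := by
    ext x; by_cases x ∈ meagreLocus s <;> simp [baireHull, *]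
  rw [this]
  exact (isOpen_meagreLocus s).baireMeasurableSet.compl.union
    (isMeagre_inter_meagreLocus s).baireMeasurableSet

lemma isMeagre_diff_of_residualEq {s t : Set X} (h : s =ᵇ t) : IsMeagre (s \ t) :=
  (eventuallyEq_set.1 h).mono fun _ hx hst => hst.2 (hx.1 hst.1)

lemma isMeagre_baireHull_diff {s t : Set X} (hst : s ⊆ t) (ht : BaireMeasurableSet t) :
    IsMeagre (baireHull s \ t) := by
  set E := (meagreLocus s)ᶜ \ t
  have hsub : baireHull s \ t ⊆ E := fun x ⟨hx, hxt⟩ =>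
    ⟨hx.resolve_left fun hxs => hxt (hst hxs), hxt⟩
  obtain ⟨V, hV, hEV⟩ :=
    ((isOpen_meagreLocus s).baireMeasurableSet.compl.diff ht).residualEq_isOpen
  have hVs : V ⊆ meagreLocus s := by
    refine subset_meagreLocus hV ((isMeagre_diff_of_residualEq hEV.symm).mono ?_)
    exact fun x ⟨hxs, hxV⟩ => ⟨hxV, fun hxE => hxE.2 (hst hxs)⟩
  have hEV' : E ⊆ E \ V := fun x hx => ⟨hx, fun hxV => hx.1 (hVs hxV)⟩
  exact (isMeagre_diff_of_residualEq hEV).mono (hsub.trans hEV')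

end BaireHull

section Cylinders

variable {α : Type*}

def listCylinder (l : List α) : Set (ℕ → α) := {y | res y l.length = l}

@[simp]
lemma listCylinder_nil : listCylinder ([] : List α) = univ := by
  simp [listCylinder]

lemma listCylinder_eq_iUnion (l : List α) : listCylinder l = ⋃ a, listCylinder (a :: l) := by
  ext y
  simp [listCylinder, res_succ]

lemma listCylinder_res (y : ℕ → α) (n : ℕ) : listCylinder (res y n) = cylinder y n := by
  rw [cylinder_eq_res, listCylinder, res_length]

lemma exists_forall_res_of_forall_exists_cons {P : List α → Prop} (h0 : P [])
    (hstep : ∀ l, P l → ∃ a, P (a :: l)) : ∃ y : ℕ → α, ∀ n, P (res y n) := by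
  classical
  have : ∀ l, ∃ a, P l → P (a :: l) := fun l =>
    if h : P l then (hstep l h).imp fun _ ha _ => ha
    else ⟨(hstep [] h0).choose, fun h' => absurd h' h⟩
  choose next hnext using this
  let L : ℕ → List α := fun n => Nat.rec [] (fun _ l => next l :: l) n
  have hL : ∀ n, res (fun k => next (L k)) n = L n := by
    intro n; induction n with
    | zero => rfl
    | succ n ih => rw [res_succ, ih]
  refine ⟨fun k => next (L k), fun n => ?_⟩
  rw [hL]
  induction n with
  | zero => exact h0
  | succ n ih => exact hnext _ ih

lemma eq_of_forall_mem_closure_image_cylinder [TopologicalSpace α] [DiscreteTopology α]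
    {β : Type*} [TopologicalSpace β] [T2Space β] {f : (ℕ → α) → β} {y : ℕ → α} {x : β}
    (hf : ContinuousAt f y) (hx : ∀ n, x ∈ closure (f '' cylinder y n)) : x = f y := by
  refine eq_of_nhds_neBot (inf_neBot_iff.2 fun U hU V hV => ?_)
  obtain ⟨_, ⟨z, n, rfl⟩, hyz, hzV⟩ :=
    (isTopologicalBasis_cylinders fun _ => α).mem_nhds_iff.1 (hf hV)
  rw [← mem_cylinder_iff_eq.1 hyz] at hzV
  obtain ⟨_, hxU, w, hw, rfl⟩ := mem_closure_iff_nhds.1 (hx n) U hU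
  exact ⟨f w, hxU, hzV hw⟩

end Cylinders

/-- Lusin–Sierpiński. For `s = range f`, let `B l` be the Baire hull of the image of the cylinder
`l`. Off the meagre set `M` where some `B l` is not covered by its children, a point of `B []`
follows a branch `y` of nested hulls, and continuity of `f` at `y` forces the point to be `f y`. -/
theorem MeasureTheory.AnalyticSet.baireMeasurableSet {X : Type*} [TopologicalSpace X]
    [T2Space X] [SecondCountableTopology X] {s : Set X} (hs : AnalyticSet s) :
    BaireMeasurableSet s := by
  rw [AnalyticSet] at hs
  rcases hs with rfl | ⟨f, hf, rfl⟩
  · exact IsMeagre.empty.baireMeasurableSet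
  set B : List ℕ → Set X := fun l => baireHull (f '' listCylinder l)
  set M : Set X := ⋃ l, B l \ ⋃ a, B (a :: l)
  have hM : IsMeagre M := by
    refine isMeagre_iUnion fun l => isMeagre_baireHull_diff ?_
      (BaireMeasurableSet.iUnion fun a => baireMeasurableSet_baireHull _)
    rw [listCylinder_eq_iUnion, image_iUnion]
    exact iUnion_mono fun a => subset_baireHull _
  have hrange : range f ⊆ B [] := by
    rw [← image_univ, ← listCylinder_nil]
    exact subset_baireHull _
  have hbranch : B [] \ M ⊆ range f := by
    rintro x ⟨hx, hxM⟩
    obtain ⟨y, hy⟩ := exists_forall_res_of_forall_exists_cons (P := fun l => x ∈ B l) hx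
      fun l hl => by_contra fun h => hxM (mem_iUnion.2 ⟨l, hl, fun h' => h (mem_iUnion.1 h')⟩)
    refine ⟨y, (eq_of_forall_mem_closure_image_cylinder hf.continuousAt fun n => ?_).symm⟩
    rw [← listCylinder_res]
    exact baireHull_subset_closure _ (hy n)
  have : range f = B [] \ (B [] \ range f) := (sdiff_sdiff_cancel_left hrange).symm
  rw [this]
  exact (baireMeasurableSet_baireHull _).diff
    (hM.mono fun x hx => not_not.1 fun h => hx.2 (hbranch ⟨hx.1, h⟩)).baireMeasurableSet

lemma MeasureTheory.AnalyticSet.prod {X Y : Type*} [TopologicalSpace X] [TopologicalSpace Y]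
    {s : Set X} {t : Set Y} (hs : AnalyticSet s) (ht : AnalyticSet t) : AnalyticSet (s ×ˢ t) := by
  rw [analyticSet_iff_exists_polishSpace_range] at hs ht ⊢
  obtain ⟨β, _, _, f, hf, rfl⟩ := hs
  obtain ⟨γ, _, _, g, hg, rfl⟩ := ht
  exact ⟨β × γ, _, inferInstance, Prod.map f g, hf.prodMap hg, range_prodMap⟩

section AnalyticMul

variable {M : Type*} [Monoid M] [TopologicalSpace M] [ContinuousMul M]

lemma MeasureTheory.AnalyticSet.mul {s t : Set M} (hs : AnalyticSet s) (ht : AnalyticSet t) :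
    AnalyticSet (s * t) := by
  rw [← image_mul_prod]
  exact (hs.prod ht).image_of_continuous continuous_mul

lemma MeasureTheory.AnalyticSet.pow {s : Set M} (hs : AnalyticSet s) (n : ℕ) :
    AnalyticSet (s ^ n) := by
  induction n with
  | zero =>
    rw [pow_zero, ← singleton_one, ← range_const (ι := Unit) (c := (1 : M))]
    exact analyticSet_range_of_polishSpace continuous_const
  | succ n ih => rw [pow_succ]; exact ih.mul hs

end AnalyticMul

lemma List.prod_mem_pow_length {M : Type*} [Monoid M] {s : Set M} {l : List M}
    (h : ∀ x ∈ l, x ∈ s) : l.prod ∈ s ^ l.length := by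
  induction l with
  | nil => exact Set.one_mem_one
  | cons a l ih =>
    rw [List.prod_cons, List.length_cons, pow_succ']
    exact mul_mem_mul (h a List.mem_cons_self) (ih fun x hx => h x (List.mem_cons_of_mem a hx))

section TopologicalGroup

variable {G : Type*} [Group G] [TopologicalSpace G] [IsTopologicalGroup G]

theorem BaireMeasurableSet.mul_inv_mem_nhds_one [BaireSpace G] {A : Set G}
    (hA : BaireMeasurableSet A) (hA' : ¬ IsMeagre A) : A * A⁻¹ ∈ 𝓝 (1 : G) := by
  obtain ⟨U, hU, hAU⟩ := hA.residualEq_isOpen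
  have hAU' : ∀ᶠ x in residual G, x ∈ A ↔ x ∈ U := eventuallyEq_set.1 hAU
  obtain ⟨u, hu⟩ : U.Nonempty := nonempty_iff_ne_empty.2 fun h => hA' <|
    hAU'.mono fun x hx hxA => by simpa [h] using hx.1 hxA
  refine mem_of_superset ((hU.mul_right (t := U⁻¹)).mem_nhds
    ⟨u, hu, u⁻¹, inv_mem_inv.2 hu, mul_inv_cancel u⟩) ?_
  rintro g ⟨a, ha, b, hb, rfl⟩
  have hfreq : ∃ᶠ x in residual G, x ∈ U ∩ ((a * b)⁻¹ * ·) ⁻¹' U :=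
    not_isMeagre_of_isOpen (hU.inter (hU.preimage (continuous_const_mul _)))
      ⟨a, ha, by simpa using hb⟩
  have hshift : ∀ᶠ x in residual G, (a * b)⁻¹ * x ∈ A ↔ (a * b)⁻¹ * x ∈ U :=
    (tendsto_residual_of_isOpenMap (continuous_const_mul _) (isOpenMap_mul_left _)).eventually hAU'
  obtain ⟨x, ⟨hxU, hx'U⟩, hxA, hx'A⟩ := (hfreq.and_eventually (hAU'.and hshift)).exists
  exact ⟨x, hxA.2 hxU, ((a * b)⁻¹ * x)⁻¹, inv_mem_inv.2 (hx'A.2 hx'U), by group⟩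

lemma Subgroup.exists_ne_one_mem_of_not_countable [SecondCountableTopology G] {H : Subgroup G}
    (hH : ¬ (H : Set G).Countable) {U : Set G} (hU : U ∈ 𝓝 (1 : G)) :
    ∃ g ∈ H, g ∈ U ∧ g ≠ 1 := by
  by_contra! h
  have : DiscreteTopology H := discreteTopology_of_isOpen_singleton_one <|
    isOpen_iff_mem_nhds.2 fun x hx => by
      rw [mem_singleton_iff.1 hx, nhds_subtype, Filter.mem_comap]
      exact ⟨U, hU, fun g hg => Subtype.ext (h g g.2 hg)⟩
  exact hH ((HereditarilyLindelofSpace.isLindelof _).countable this)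

lemma exists_nhds_one_pow_subset {V : Set G} (hV : V ∈ 𝓝 (1 : G)) (n : ℕ) :
    ∃ U ∈ 𝓝 (1 : G), U ^ n ⊆ V := by
  induction n generalizing V with
  | zero => exact ⟨V, hV, by simpa using mem_of_mem_nhds hV⟩
  | succ n ih =>
    obtain ⟨W, hW, hWV⟩ := exists_nhds_one_split hV
    obtain ⟨U, hU, hUW⟩ := ih hW
    refine ⟨U ∩ W, inter_mem hU hW, ?_⟩
    rw [pow_succ]
    rintro _ ⟨a, ha, b, hb, rfl⟩
    exact hWV a (hUW (pow_subset_pow_left inter_subset_left ha)) b hb.2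

end TopologicalGroup

section SubgroupFamily

variable {G : Type*} [Group G]

lemma iUnion_pow_eq_univ_of_closure_eq_top {s : Set G} (hs : s⁻¹ = s)
    (h : Subgroup.closure s = ⊤) : ⋃ n : ℕ, s ^ n = univ := by
  refine eq_univ_of_forall fun g => mem_iUnion.2 ?_
  induction (h ▸ Subgroup.mem_top g : g ∈ Subgroup.closure s) using Subgroup.closure_induction with
  | mem x hx => exact ⟨1, by rwa [pow_one]⟩
  | one => exact ⟨0, by rw [pow_zero]; exact Set.one_mem_one⟩
  | mul x y _ _ hx hy =>
    obtain ⟨m, hm⟩ := hx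
    obtain ⟨n, hn⟩ := hy
    exact ⟨m + n, by rw [pow_add]; exact mul_mem_mul hm hn⟩
  | inv x _ hx =>
    obtain ⟨n, hn⟩ := hx
    exact ⟨n, by rw [← hs, inv_pow]; exact inv_mem_inv.2 hn⟩

variable {ι : Type*} (H : ι → Subgroup G)

lemma le_iSup_finset {F : Finset ι} {i : ι} (hi : i ∈ F) : H i ≤ ⨆ j ∈ F, H j :=
  le_iSup₂ (f := fun j (_ : j ∈ F) => H j) i hi

lemma iSup_finset_mono {F F' : Finset ι} (h : F ⊆ F') : ⨆ i ∈ F, H i ≤ ⨆ i ∈ F', H i :=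
  biSup_mono fun _ hi => h hi

variable [DecidableEq ι]

lemma exists_finset_card_le_mem_iSup_of_mem_pow {n : ℕ} {g : G}
    (hg : g ∈ (⋃ i, (H i : Set G)) ^ n) : ∃ F : Finset ι, F.card ≤ n ∧ g ∈ ⨆ i ∈ F, H i := by
  induction n generalizing g with
  | zero => exact ⟨∅, le_rfl, by rw [pow_zero, Set.mem_one] at hg; exact hg ▸ one_mem _⟩
  | succ n ih =>
    rw [pow_succ] at hg
    obtain ⟨a, ha, b, hb, rfl⟩ := hg
    obtain ⟨F, hF, haF⟩ := ih ha
    obtain ⟨i, hi⟩ := mem_iUnion.1 hb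
    refine ⟨insert i F, (F.card_insert_le i).trans (by omega), mul_mem ?_ ?_⟩
    · exact iSup_finset_mono H (Finset.subset_insert i F) haF
    · exact le_iSup_finset H (F.mem_insert_self i) hi

lemma forall_mem_of_list_prod_mem_iSup
    (hindep : ∀ (F : Finset ι) (i : ι), i ∉ F → H i ⊓ (⨆ j ∈ F, H j) = ⊥)
    {l : List ι} (hl : l.Nodup) {g : ι → G} (hg : ∀ i ∈ l, g i ∈ H i ∧ g i ≠ 1)
    {F : Finset ι} (hF : (l.map g).prod ∈ ⨆ i ∈ F, H i) : ∀ i ∈ l, i ∈ F := by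
  induction l with
  | nil => simp
  | cons i l ih =>
    rw [List.map_cons, List.prod_cons] at hF
    obtain ⟨hil, hl⟩ := List.nodup_cons.1 hl
    have hr : (l.map g).prod ∈ ⨆ j ∈ F ∪ l.toFinset, H j :=
      Subgroup.list_prod_mem _ (List.forall_mem_map.2 fun j hj =>
        le_iSup_finset H (Finset.mem_union_right _ (List.mem_toFinset.2 hj))
          (hg j (List.mem_cons_of_mem _ hj)).1)
    -- otherwise `g i = (g i * r) * r⁻¹` lies in `H i` and in the span of `F` and the tail indices
    have hiF : i ∈ F := by
      by_contra hiF
      refine (hg i List.mem_cons_self).2 ((Subgroup.mem_bot).1 ?_)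
      rw [← hindep (F ∪ l.toFinset) i (by simp [hiF, hil])]
      refine ⟨(hg i List.mem_cons_self).1, ?_⟩
      have := mul_mem (iSup_finset_mono H Finset.subset_union_left hF) (inv_mem hr)
      rwa [mul_inv_cancel_right] at this
    refine List.forall_mem_cons.2 ⟨hiF, ih hl (fun j hj => hg j (List.mem_cons_of_mem _ hj)) ?_⟩
    have := mul_mem (inv_mem (le_iSup_finset H hiF (hg i List.mem_cons_self).1)) hF
    rwa [inv_mul_cancel_left] at this

end SubgroupFamily

theorem stmt_1 (G : Type*) [Group G] [TopologicalSpace G] [IsTopologicalGroup G]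
    [PolishSpace G] (H : ℝ → Subgroup G)
    (hanalytic : MeasureTheory.AnalyticSet {p : G × ℝ | p.1 ∈ H p.2})
    (hindep : ∀ (F : Finset ℝ) (x : ℝ), x ∉ F → H x ⊓ (⨆ y ∈ F, H y) = ⊥)
    (hgen : (⨆ x : ℝ, H x) = ⊤) :
    {x : ℝ | ¬ (H x : Set G).Countable}.Finite := by
  set W : Set G := ⋃ x, (H x : Set G)
  have hW : AnalyticSet W := by
    have : W = Prod.fst '' {p : G × ℝ | p.1 ∈ H p.2} := by ext g; simp [W]
    exact this ▸ hanalytic.image_of_continuous continuous_fst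
  have hWinv : W⁻¹ = W := by simp [W]
  obtain ⟨n, hn⟩ : ∃ n, ¬ IsMeagre (W ^ n) := by
    by_contra! h
    refine not_isMeagre_of_isOpen isOpen_univ (univ_nonempty (α := G)) ?_
    rw [← iUnion_pow_eq_univ_of_closure_eq_top hWinv (Subgroup.iSup_eq_closure H ▸ hgen)]
    exact isMeagre_iUnion h
  have hV : W ^ (n + n) ∈ 𝓝 (1 : G) := by
    have := (hW.pow n).baireMeasurableSet.mul_inv_mem_nhds_one hn
    rwa [← inv_pow, hWinv, ← pow_add] at this
  obtain ⟨U, hU, hUV⟩ := exists_nhds_one_pow_subset hV (n + n + 1)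
  by_contra hinf
  obtain ⟨t, hts, ht⟩ := Set.Infinite.exists_subset_card_eq hinf (n + n + 1)
  choose! g hgH hgU hg1 using fun x (hx : x ∈ t) =>
    (H x).exists_ne_one_mem_of_not_countable (hts hx) hU
  have hprod : (t.toList.map g).prod ∈ W ^ (n + n) := by
    refine hUV ?_
    have := List.prod_mem_pow_length (s := U) (l := t.toList.map g) <| List.forall_mem_map.2
      fun x hx => hgU x (Finset.mem_toList.1 hx)
    rwa [List.length_map, Finset.length_toList, ht] at this
  obtain ⟨F, hFcard, hF⟩ := exists_finset_card_le_mem_iSup_of_mem_pow H hprod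
  have htF : t ⊆ F := fun x hx =>
    forall_mem_of_list_prod_mem_iSup H hindep t.nodup_toList
      (fun y hy => ⟨hgH y (Finset.mem_toList.1 hy), hg1 y (Finset.mem_toList.1 hy)⟩) hF x
      (Finset.mem_toList.2 hx)
  have := Finset.card_le_card htF
  omega
end

section
/- Let A be an uncountable abelian Polish group. Then either there is a continuous injective group homomorphism ℓ¹(ℤ) → A, or there is a prime p and a continuous injective group homomorphism (ℤ/pℤ)^ℕ → A. -/
/-- Membership in `ℓ¹(ℤ)`: the series `Σ |x k| / k!` converges. -/
def MemL1Z (x : ℕ → ℤ) : Prop :=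
  Summable fun k => (|x k| : ℝ) / (Nat.factorial k : ℝ)

/-- The `ℓ¹` norm `Σ_k |x k| / k!` on `ℓ¹(ℤ)`. -/
noncomputable def l1NormZ (x : ℕ → ℤ) : ℝ :=
  ∑' k, (|x k| : ℝ) / (Nat.factorial k : ℝ)

/-- `ℤ/nℤ` carries the discrete topology. -/
instance (n : ℕ) : TopologicalSpace (ZMod n) := ⊥

/-!
Fix a complete compatible metric on `A` and a basis `V₀ ⊇ V₁ ⊇ ⋯` of neighbourhoods of `0` with
`Vₙ₊₁ + Vₙ₊₁ ⊆ Vₙ`. If `A[p]` is uncountable for some prime `p`, let `T = A[p]`; otherwise every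
`A[n]` with `n ≠ 0` is countable and `T = A`. Either way each integer annihilates `T` or has
countable kernel on `T`, and `T` stays uncountable in every neighbourhood of `0` by separability.

Choose `a₀, a₁, … ∈ T` inductively. The term `aₖ` avoids the countable set of elements having a
multiple that is an integer combination of `a₀, …, aₖ₋₁` without annihilating `T`, and it is so
close to `0` that its boundedly many multiples move each of the finitely many bounded partial sums
by less than `2⁻ᵏ` and lie deep in the chain. Then `x ↦ ∑ xₖ aₖ` converges for coefficients
bounded by `b · k!` (this covers `ℓ¹(ℤ)`) or by `p` (this covers `(ℤ/p)^ℕ`), and it is additive and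
continuous. It is injective because an index `iₖ`, chosen together with `aₖ`, keeps every nonzero
bounded combination of `a₀, …, aₖ₋₁` outside `V iₖ` while every tail from `aₖ` on lies inside.
-/

open Filter Topology Set Finset Pointwise

theorem exists_seq_forall_prefix {X : Type*} (P : (k : ℕ) → (Fin k → X) → X → Prop)
    (h : ∀ k pre, ∃ x, P k pre x) : ∃ f : ℕ → X, ∀ k, P k (fun j => f j) (f k) := by
  choose next hnext using h
  let f : ℕ → X := Nat.strongRec fun k prev => next k fun j => prev j j.2
  refine ⟨f, fun k => ?_⟩
  rw [show f k = next k fun j => f j from Nat.strongRec_eq _ k]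
  exact hnext _ _

section Countability

variable {G H : Type*} [AddGroup G] [AddGroup H]

theorem AddMonoidHom.countable_inter_preimage (φ : G →+ H) (S : AddSubgroup G)
    (hker : {g | g ∈ S ∧ φ g = 0}.Countable) {s : Set H} (hs : s.Countable) :
    {g | g ∈ S ∧ φ g ∈ s}.Countable := by
  have hfiber : ∀ h, {g | g ∈ S ∧ φ g = h}.Countable := by
    intro h
    rcases Set.eq_empty_or_nonempty {g | g ∈ S ∧ φ g = h} with hempty | ⟨g₀, hg₀S, hg₀⟩
    · simp [hempty]
    have hsub : {g | g ∈ S ∧ φ g = h} ⊆ (g₀ + ·) '' {g | g ∈ S ∧ φ g = 0} :=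
      fun g hg => ⟨-g₀ + g, ⟨S.add_mem (S.neg_mem hg₀S) hg.1, by simp [hg.2, hg₀]⟩, by simp⟩
    exact (hker.image _).mono hsub
  have hsub : {g | g ∈ S ∧ φ g ∈ s} ⊆ ⋃ h ∈ s, {g | g ∈ S ∧ φ g = h} :=
    fun g hg => Set.mem_biUnion hg.2 ⟨hg.1, rfl⟩
  exact (hs.biUnion fun h _ => hfiber h).mono hsub

variable [TopologicalSpace G] [IsTopologicalAddGroup G] [SecondCountableTopology G]

theorem AddSubgroup.not_countable_inter_of_mem_nhds {T : AddSubgroup G}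
    (hT : ¬ (T : Set G).Countable) {U : Set G} (hU : U ∈ 𝓝 0) : ¬ ((T : Set G) ∩ U).Countable := by
  intro hTU
  obtain ⟨D, hDT, hD, hcover⟩ := TopologicalSpace.countable_cover_nhdsWithin
    (s := (T : Set G)) (f := fun t => ({t} : Set G) + U)
    fun t _ => mem_nhdsWithin_of_mem_nhds (singleton_add_mem_nhds_of_nhds_zero t hU)
  refine hT (Set.Countable.mono (fun g hg => ?_) (hD.biUnion fun t _ => hTU.image (t + ·)))
  obtain ⟨t, htD, hgt⟩ := Set.mem_iUnion₂.mp (hcover hg)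
  obtain ⟨t', rfl, u, hu, rfl⟩ := hgt
  refine Set.mem_biUnion htD ⟨u, ⟨?_, hu⟩, rfl⟩
  simpa using T.add_mem (T.neg_mem (hDT htD)) hg

end Countability

section Torsion

variable {A : Type*} [AddCommGroup A]

theorem countable_torsion_of_forall_prime
    (h : ∀ p : ℕ, p.Prime → {c : A | p • c = 0}.Countable) :
    ∀ n : ℕ, n ≠ 0 → {c : A | n • c = 0}.Countable := by
  intro n
  induction n using induction_on_primes with
  | zero => exact fun h0 => absurd rfl h0
  | one => simp
  | prime_mul p a hp ih =>
    intro hpa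
    have hpre := (nsmulAddMonoidHom (α := A) a).countable_inter_preimage ⊤
      (by simpa using ih (right_ne_zero_of_mul hpa)) (h p hp)
    refine hpre.mono fun c hc => ?_
    exact ⟨trivial, by simpa [mul_nsmul'] using hc⟩

theorem zsmul_val_add {p : ℕ} [NeZero p] {c : A} (hc : p • c = 0) (u v : ZMod p) :
    ((u + v).val : ℤ) • c = ((u.val : ℤ) + v.val) • c := by
  rw [ZMod.val_add, ← Nat.cast_add, natCast_zsmul, natCast_zsmul, ← nsmul_eq_mod_nsmul _ hc]

theorem natCast_dvd_of_zsmul_eq_zero {p : ℕ} [Fact p.Prime]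
    {c : A} (hc : p • c = 0) (hc0 : c ≠ 0) {m : ℤ} (hm : m • c = 0) : (p : ℤ) ∣ m := by
  rw [← addOrderOf_eq_prime hc hc0]
  exact addOrderOf_dvd_iff_zsmul_eq_zero.2 hm

theorem forall_zsmul_eq_zero_or_countable_ker_nsmul {p : ℕ} [Fact p.Prime]
    (m : ℤ) : (∀ c ∈ (nsmulAddMonoidHom (α := A) p).ker, m • c = 0) ∨
      {c | c ∈ (nsmulAddMonoidHom (α := A) p).ker ∧ m • c = 0}.Countable := by
  simp only [AddMonoidHom.mem_ker, nsmulAddMonoidHom_apply]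
  by_cases hm : (p : ℤ) ∣ m
  · obtain ⟨k, rfl⟩ := hm
    exact Or.inl fun c hc => by rw [mul_comm, mul_zsmul, natCast_zsmul, hc, smul_zero]
  · refine Or.inr ((Set.countable_singleton 0).mono fun c hc => ?_)
    by_contra hc0
    exact hm (natCast_dvd_of_zsmul_eq_zero hc.1 hc0 hc.2)

theorem forall_zsmul_eq_zero_or_countable_top
    (htor : ∀ n : ℕ, n ≠ 0 → {c : A | n • c = 0}.Countable) (m : ℤ) :
    (∀ c ∈ (⊤ : AddSubgroup A), m • c = 0) ∨
      {c | c ∈ (⊤ : AddSubgroup A) ∧ m • c = 0}.Countable := by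
  rcases eq_or_ne m 0 with rfl | hm0
  · exact Or.inl fun c _ => zero_zsmul c
  · refine Or.inr ((htor _ (Int.natAbs_ne_zero.2 hm0)).mono fun c hc => ?_)
    exact natAbs_nsmul_eq_zero.2 hc.2

theorem countable_setOf_not_free {T : AddSubgroup A}
    (hann : ∀ m : ℤ, (∀ c ∈ T, m • c = 0) ∨ {c | c ∈ T ∧ m • c = 0}.Countable)
    {H : Set A} (hH : H.Countable) :
    {c | c ∈ T ∧ ∃ m : ℤ, m • c ∈ H ∧ ¬ ∀ c' ∈ T, m • c' = 0}.Countable := by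
  have hsub : {c | c ∈ T ∧ ∃ m : ℤ, m • c ∈ H ∧ ¬ ∀ c' ∈ T, m • c' = 0} ⊆
      ⋃ m : ℤ, {c | c ∈ T ∧ m • c ∈ H ∧ ¬ ∀ c' ∈ T, m • c' = 0} :=
    fun c ⟨hc, m, hm⟩ => mem_iUnion.2 ⟨m, hc, hm⟩
  refine (countable_iUnion fun m => ?_).mono hsub
  rcases hann m with hm | hm
  · exact Set.countable_empty.mono fun c hc => (hc.2.2 hm).elim
  · refine Set.Countable.mono ?_ ((zsmulAddGroupHom m).countable_inter_preimage T hm hH)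
    exact fun c hc => ⟨hc.1, hc.2.1⟩

end Torsion

structure NhdsZeroChain (A : Type*) [AddGroup A] [TopologicalSpace A] where
  V : ℕ → Set A
  hasAntitoneBasis : (𝓝 (0 : A)).HasAntitoneBasis V
  add_subset : ∀ n, V (n + 1) + V (n + 1) ⊆ V n

namespace NhdsZeroChain

variable {A : Type*} [AddCommGroup A] [TopologicalSpace A]

theorem nonempty [IsTopologicalAddGroup A] [FirstCountableTopology A] :
    Nonempty (NhdsZeroChain A) :=
  let ⟨V, hV, hadd⟩ := IsTopologicalAddGroup.exists_antitone_basis_nhds_zero A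
  ⟨⟨V, hV, hadd⟩⟩

variable (C : NhdsZeroChain A)

theorem mem_nhds (n : ℕ) : C.V n ∈ 𝓝 0 := C.hasAntitoneBasis.mem n

theorem zero_mem (n : ℕ) : (0 : A) ∈ C.V n := mem_of_mem_nhds (C.mem_nhds n)

theorem antitone : Antitone C.V := C.hasAntitoneBasis.antitone

theorem add_mem {n : ℕ} {a b : A} (ha : a ∈ C.V (n + 1)) (hb : b ∈ C.V (n + 1)) :
    a + b ∈ C.V n :=
  C.add_subset n (Set.add_mem_add ha hb)

theorem sum_range_mem {t : ℕ → A} {B L : ℕ} (ht : ∀ j < L, t j ∈ C.V (B + 1 + j)) :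
    ∑ j ∈ range L, t j ∈ C.V B := by
  induction L generalizing B t with
  | zero => simpa using C.zero_mem B
  | succ L ih =>
    rw [sum_range_succ']
    refine C.add_mem (ih fun j hj => ?_) (by simpa using ht 0 (by omega))
    rw [show B + 1 + 1 + j = B + 1 + (j + 1) by omega]
    exact ht (j + 1) (by omega)

theorem closure_subset [IsTopologicalAddGroup A] (n : ℕ) : closure (C.V (n + 1)) ⊆ C.V n := by
  refine closure_subset_of_mem_nhds_zero_of_neg_add_left_subset
    (s := C.V (n + 1) ∩ -C.V (n + 1))
    (inter_mem (C.mem_nhds _) (neg_mem_nhds_zero _ (C.mem_nhds _))) (fun x hx => ?_) ?_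
  · exact ⟨hx.2, by simpa using hx.1⟩
  · exact (Set.add_subset_add_right inter_subset_left).trans (C.add_subset n)

theorem sub_sum_range_mem [IsTopologicalAddGroup A] {t : ℕ → A} {F : A}
    (hF : Tendsto (fun K => ∑ j ∈ range K, t j) atTop (𝓝 F)) {B N : ℕ}
    (ht : ∀ j ≥ N, t j ∈ C.V (B + 2 + (j - N))) : F - ∑ j ∈ range N, t j ∈ C.V B := by
  refine C.closure_subset B (mem_closure_of_tendsto (hF.sub_const _) ?_)
  filter_upwards [eventually_ge_atTop N] with K hK
  rw [← sum_Ico_eq_sub _ hK, sum_Ico_eq_sum_range]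
  exact C.sum_range_mem fun j _ => by simpa [add_assoc] using ht (N + j) (by omega)

theorem exists_forall_notMem [T1Space A] {s : Set A} (hs : s.Finite) :
    ∃ n, ∀ a ∈ s, a ≠ 0 → a ∉ C.V n := by
  have : (s \ {0})ᶜ ∈ 𝓝 (0 : A) :=
    (hs.sdiff.isClosed.isOpen_compl).mem_nhds (by simp)
  obtain ⟨n, hn⟩ := C.hasAntitoneBasis.mem_iff.mp this
  exact ⟨n, fun a ha ha0 haV => hn haV ⟨ha, ha0⟩⟩

end NhdsZeroChain

section Series

variable {A : Type*} [AddCommGroup A]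

def partialSum (a : ℕ → A) (x : ℕ → ℤ) (K : ℕ) : A :=
  ∑ j ∈ range K, x j • a j

def intCombinations {k : ℕ} (a : Fin k → A) : Set A :=
  Set.range fun y : Fin k → ℤ => ∑ j, y j • a j

def boxSums {k : ℕ} (a : Fin k → A) (bound : ℕ → ℕ) : Set A :=
  (fun y : Fin k → ℤ => ∑ j, y j • a j) ''
    (Fintype.piFinset fun j : Fin k => Finset.Icc (-(bound j : ℤ)) (bound j) : Set (Fin k → ℤ))

theorem finite_boxSums {k : ℕ} (a : Fin k → A) (bound : ℕ → ℕ) : (boxSums a bound).Finite :=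
  (Finset.finite_toSet _).image _

theorem partialSum_mem_boxSums (a : ℕ → A) {x : ℕ → ℤ} {k : ℕ} {bound : ℕ → ℕ}
    (hx : ∀ j < k, |x j| ≤ bound j) : partialSum a x k ∈ boxSums (fun j : Fin k => a j) bound :=
  ⟨fun j => x j, by
    simpa only [Finset.mem_coe, Fintype.mem_piFinset, Finset.mem_Icc, ← abs_le] using
      fun j : Fin k => hx j j.2,
    Fin.sum_univ_eq_sum_range (fun j => x j • a j) k⟩

theorem neg_partialSum_mem_intCombinations (a : ℕ → A) (x : ℕ → ℤ) (k : ℕ) :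
    -partialSum a x k ∈ intCombinations fun j : Fin k => a j :=
  ⟨fun j => -x j, by
    simp [partialSum, Fin.sum_univ_eq_sum_range (fun j => x j • a j) k, neg_smul]⟩

theorem partialSum_add (a : ℕ → A) (x y : ℕ → ℤ) (K : ℕ) :
    partialSum a (x + y) K = partialSum a x K + partialSum a y K := by
  simp [partialSum, add_smul, sum_add_distrib]

theorem zsmul_eq_zero_of_partialSum_eq_zero {T : AddSubgroup A} {a : ℕ → A}
    (haT : ∀ k, a k ∈ T)
    (hfree : ∀ k (m : ℤ), m • a k ∈ intCombinations (fun j : Fin k => a j) → ∀ c ∈ T, m • c = 0)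
    {x : ℕ → ℤ} {K : ℕ} (hx : partialSum a x K = 0) : ∀ j < K, ∀ c ∈ T, x j • c = 0 := by
  induction K with
  | zero => simp
  | succ K ih =>
    rw [partialSum, sum_range_succ] at hx
    have hann : ∀ c ∈ T, x K • c = 0 := by
      refine hfree K (x K) ?_
      rw [eq_neg_of_add_eq_zero_right hx]
      exact neg_partialSum_mem_intCombinations a x K
    rw [hann _ (haT K), add_zero] at hx
    intro j hj
    rcases Nat.lt_succ_iff_lt_or_eq.mp hj with hj | rfl
    exacts [ih hx j hj, hann]

variable [TopologicalSpace A]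

noncomputable def seriesSum (a : ℕ → A) (x : ℕ → ℤ) : A :=
  limUnder atTop (partialSum a x)

theorem seriesSum_congr {a : ℕ → A} {x y : ℕ → ℤ} (h : ∀ j, x j • a j = y j • a j) :
    seriesSum a x = seriesSum a y := by
  have : partialSum a x = partialSum a y := funext fun K => sum_congr rfl fun j _ => h j
  rw [seriesSum, seriesSum, this]

theorem seriesSum_add [ContinuousAdd A] [T2Space A] {a : ℕ → A} {x y : ℕ → ℤ}
    (hx : ∃ F, Tendsto (partialSum a x) atTop (𝓝 F))
    (hy : ∃ F, Tendsto (partialSum a y) atTop (𝓝 F)) :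
    seriesSum a (x + y) = seriesSum a x + seriesSum a y := by
  refine Tendsto.limUnder_eq ?_
  rw [funext (partialSum_add a x y)]
  exact (tendsto_nhds_limUnder hx).add (tendsto_nhds_limUnder hy)

end Series

section Construction

variable {A : Type*} [AddCommGroup A] [MetricSpace A]

/-- The distance condition makes the partial sums Cauchy although the metric need not be
invariant. -/
def stepNhd (C : NhdsZeroChain A) (β : ℕ → ℕ → ℕ) (k : ℕ) (pre : Fin k → A × ℕ) (i : ℕ) :
    Set A :=
  C.V k ∩ C.V (i + 2) ∩ (⋂ n : Fin k, C.V ((pre n).2 + 2 + (k - n))) ∩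
    ⋂ s ∈ boxSums (fun j => (pre j).1) (β k), {v | dist (s + v) s < (1 / 2 : ℝ) ^ k}

theorem stepNhd_mem_nhds [IsTopologicalAddGroup A] (C : NhdsZeroChain A) (β : ℕ → ℕ → ℕ)
    (k : ℕ) (pre : Fin k → A × ℕ) (i : ℕ) : stepNhd C β k pre i ∈ 𝓝 0 := by
  refine inter_mem (inter_mem (inter_mem (C.mem_nhds _) (C.mem_nhds _))
    (iInter_mem.2 fun n => C.mem_nhds _)) ((biInter_mem (finite_boxSums _ _)).2 fun s _ => ?_)
  exact (isOpen_lt (by fun_prop) continuous_const).mem_nhds (by simp)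

/-- `x = (aₖ, iₖ)` pairs the new term with its separation index. -/
structure IsNextTerm (C : NhdsZeroChain A) (β : ℕ → ℕ → ℕ) (T : AddSubgroup A) (k : ℕ)
    (pre : Fin k → A × ℕ) (x : A × ℕ) : Prop where
  mem : x.1 ∈ T
  free : ∀ m : ℤ, m • x.1 ∈ intCombinations (fun j => (pre j).1) → ∀ c ∈ T, m • c = 0
  separates : ∀ s ∈ boxSums (fun j => (pre j).1) (β k), s ≠ 0 → s ∉ C.V x.2
  small : ∀ m : ℤ, |m| ≤ β (k + 1) k → m • x.1 ∈ stepNhd C β k pre x.2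

theorem exists_isNextTerm [IsTopologicalAddGroup A] [SecondCountableTopology A]
    (C : NhdsZeroChain A) (β : ℕ → ℕ → ℕ) {T : AddSubgroup A} (hT : ¬ (T : Set A).Countable)
    (hann : ∀ m : ℤ, (∀ c ∈ T, m • c = 0) ∨ {c | c ∈ T ∧ m • c = 0}.Countable)
    (k : ℕ) (pre : Fin k → A × ℕ) : ∃ x, IsNextTerm C β T k pre x := by
  obtain ⟨i, hi⟩ := C.exists_forall_notMem (finite_boxSums (fun j => (pre j).1) (β k))
  set M : ℤ := (β (k + 1) k : ℤ)
  have hsmall : ∀ᶠ b in 𝓝 (0 : A), ∀ m ∈ Finset.Icc (-M) M, m • b ∈ stepNhd C β k pre i :=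
    (eventually_all_finset _).2 fun m _ =>
      (continuous_zsmul m).tendsto' 0 0 (smul_zero m) (stepNhd_mem_nhds C β k pre i)
  set O := {b : A | ∀ m ∈ Finset.Icc (-M) M, m • b ∈ stepNhd C β k pre i}
  set bad := {c | c ∈ T ∧ ∃ m : ℤ,
    m • c ∈ intCombinations (fun j => (pre j).1) ∧ ¬ ∀ c' ∈ T, m • c' = 0}
  obtain ⟨b, ⟨hbT, hb⟩, hbfree⟩ : (((T : Set A) ∩ O) \ bad).Nonempty :=
    Set.sdiff_nonempty.2 fun h => T.not_countable_inter_of_mem_nhds hT hsmall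
      ((countable_setOf_not_free hann (Set.countable_range _)).mono h)
  refine ⟨(b, i), hbT, fun m hm => ?_, hi, fun m hm => hb m (by simpa [abs_le] using hm)⟩
  by_contra hann'
  exact hbfree ⟨hbT, m, hm, hann'⟩

end Construction

structure IsSeriesEmbedding {A : Type*} [AddCommGroup A] [TopologicalSpace A]
    (T : AddSubgroup A) (β : ℕ → ℕ → ℕ) (a : ℕ → A) : Prop where
  mem : ∀ j, a j ∈ T
  tendsto {b : ℕ} {x : ℕ → ℤ} :
    (∀ j, |x j| ≤ β b j) → Tendsto (partialSum a x) atTop (𝓝 (seriesSum a x))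
  zsmul_eq_zero {b : ℕ} {x : ℕ → ℤ} :
    (∀ j, |x j| ≤ β b j) → seriesSum a x = 0 → ∀ j, ∀ c ∈ T, x j • c = 0
  seriesSum_mem : ∀ U ∈ 𝓝 (0 : A), ∀ b, ∃ N, ∀ x : ℕ → ℤ,
    (∀ j, |x j| ≤ β b j) → (∀ j < N, x j = 0) → seriesSum a x ∈ U

theorem abs_le_of_monotone {β : ℕ → ℕ → ℕ} (hβ : Monotone β) {b K : ℕ} (hbK : b ≤ K)
    {x : ℕ → ℤ} (hx : ∀ j, |x j| ≤ β b j) (j : ℕ) : |x j| ≤ β K j :=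
  (hx j).trans (Nat.cast_le.2 (hβ hbK j))

section Sequence

variable {A : Type*} [AddCommGroup A] [MetricSpace A] {C : NhdsZeroChain A}
  {β : ℕ → ℕ → ℕ} {T : AddSubgroup A}

theorem zsmul_mem_V_of_le {g : ℕ → A × ℕ} (hg : ∀ k, IsNextTerm C β T k (fun j => g j) (g k))
    {k n : ℕ} {m : ℤ} (hm : |m| ≤ β (k + 1) k) (hn : n ≤ k) :
    m • (g k).1 ∈ C.V ((g n).2 + 2 + (k - n)) := by
  have h := (hg k).small m hm
  rcases hn.lt_or_eq with hn | rfl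
  · exact mem_iInter.1 h.1.2 ⟨n, hn⟩
  · simpa using h.1.1.2

theorem exists_tendsto_partialSum [CompleteSpace A] (hβ : Monotone β) {g : ℕ → A × ℕ}
    (hg : ∀ k, IsNextTerm C β T k (fun j => g j) (g k)) {b : ℕ} {x : ℕ → ℤ}
    (hx : ∀ j, |x j| ≤ β b j) : ∃ F, Tendsto (partialSum (fun k => (g k).1) x) atTop (𝓝 F) := by
  have hstep : ∀ n, dist (partialSum (fun k => (g k).1) x (n + b))
      (partialSum (fun k => (g k).1) x (n + 1 + b)) ≤ 2 / 2 / 2 ^ n := by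
    intro n
    have hsum := partialSum_mem_boxSums (fun k => (g k).1) (k := n + b)
      fun j _ => abs_le_of_monotone hβ (Nat.le_add_left b n) hx j
    have hlt := mem_iInter₂.1 ((hg (n + b)).small (x (n + b))
      (abs_le_of_monotone hβ (by omega) hx _)).2 _ hsum
    rw [dist_comm, show n + 1 + b = n + b + 1 by omega, partialSum, sum_range_succ]
    calc _ ≤ (1 / 2 : ℝ) ^ (n + b) := hlt.le
      _ ≤ (1 / 2) ^ n := pow_le_pow_of_le_one (by norm_num) (by norm_num) (by omega)
      _ = 2 / 2 / 2 ^ n := by simp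
  obtain ⟨F, hF⟩ := cauchySeq_tendsto_of_complete (cauchySeq_of_le_geometric_two hstep)
  exact ⟨F, (tendsto_add_atTop_iff_nat b).1 hF⟩

theorem zsmul_eq_zero_of_tendsto_zero [IsTopologicalAddGroup A] (hβ : Monotone β)
    {g : ℕ → A × ℕ} (hg : ∀ k, IsNextTerm C β T k (fun j => g j) (g k)) {b : ℕ} {x : ℕ → ℤ}
    (hx : ∀ j, |x j| ≤ β b j) (hF : Tendsto (partialSum (fun k => (g k).1) x) atTop (𝓝 0)) :
    ∀ j, ∀ c ∈ T, x j • c = 0 := by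
  intro n
  by_contra hn
  set K := max (n + 1) b
  have hS : partialSum (fun k => (g k).1) x K ≠ 0 := fun h0 =>
    hn (zsmul_eq_zero_of_partialSum_eq_zero (fun k => (hg k).mem) (fun k => (hg k).free) h0 n
      (by omega))
  have hsep : -partialSum (fun k => (g k).1) x K ∉ C.V (g K).2 := by
    refine (hg K).separates _ ?_ (neg_ne_zero.2 hS)
    have := partialSum_mem_boxSums (fun k => (g k).1) (x := -x) (k := K) (bound := β K)
      fun j _ => by simpa using abs_le_of_monotone hβ (le_max_right (n + 1) b) hx j
    simpa [partialSum, neg_smul] using this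
  have htail := C.sub_sum_range_mem (t := fun j => x j • (g j).1) hF (B := (g K).2) (N := K)
    fun j hj => zsmul_mem_V_of_le hg (abs_le_of_monotone hβ (by omega) hx j) hj
  exact hsep (by simpa [partialSum] using htail)

theorem seriesSum_mem_V [IsTopologicalAddGroup A] [CompleteSpace A] (hβ : Monotone β)
    {g : ℕ → A × ℕ} (hg : ∀ k, IsNextTerm C β T k (fun j => g j) (g k)) {n b : ℕ} {x : ℕ → ℤ}
    (hx : ∀ j, |x j| ≤ β b j) (hx0 : ∀ j < n + 2 + b, x j = 0) :
    seriesSum (fun k => (g k).1) x ∈ C.V n := by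
  have hF := tendsto_nhds_limUnder (exists_tendsto_partialSum hβ hg hx)
  have := C.sub_sum_range_mem (t := fun j => x j • (g j).1) hF (B := n) (N := n + 2 + b)
    fun j hj => C.antitone (show n + 2 + (j - (n + 2 + b)) ≤ j by omega)
      ((hg j).small (x j) (abs_le_of_monotone hβ (by omega) hx j)).1.1.1
  rwa [sum_eq_zero fun j hj => by rw [hx0 j (mem_range.1 hj), zero_smul], sub_zero] at this

end Sequence

theorem exists_isSeriesEmbedding {A : Type*} [AddCommGroup A] [MetricSpace A]
    [IsTopologicalAddGroup A] [CompleteSpace A] [SecondCountableTopology A] {T : AddSubgroup A}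
    (hT : ¬ (T : Set A).Countable)
    (hann : ∀ m : ℤ, (∀ c ∈ T, m • c = 0) ∨ {c | c ∈ T ∧ m • c = 0}.Countable)
    {β : ℕ → ℕ → ℕ} (hβ : Monotone β) : ∃ a, IsSeriesEmbedding T β a := by
  obtain ⟨C⟩ := NhdsZeroChain.nonempty (A := A)
  obtain ⟨g, hg⟩ := exists_seq_forall_prefix (IsNextTerm C β T) (exists_isNextTerm C β hT hann)
  have htendsto {b : ℕ} {x : ℕ → ℤ} (hx : ∀ j, |x j| ≤ β b j) :=
    tendsto_nhds_limUnder (exists_tendsto_partialSum hβ hg hx)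
  refine ⟨fun k => (g k).1, fun k => (hg k).mem, htendsto,
    fun hx h0 => zsmul_eq_zero_of_tendsto_zero hβ hg hx (h0 ▸ htendsto hx), fun U hU b => ?_⟩
  obtain ⟨n, hn⟩ := C.hasAntitoneBasis.mem_iff.1 hU
  exact ⟨n + 2 + b, fun x hx hx0 => hn (seriesSum_mem_V hβ hg hx hx0)⟩

theorem MemL1Z.sub {x y : ℕ → ℤ} (hx : MemL1Z x) (hy : MemL1Z y) : MemL1Z (x - y) := by
  refine (hx.add hy).of_nonneg_of_le (fun k => by positivity) fun k => ?_
  rw [← add_div]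
  gcongr
  exact_mod_cast abs_sub _ _

theorem MemL1Z.abs_le {x : ℕ → ℤ} (hx : MemL1Z x) (j : ℕ) :
    (|x j| : ℝ) ≤ l1NormZ x * j.factorial := by
  rw [← div_le_iff₀ (by positivity)]
  exact hx.le_tsum j fun k _ => by positivity

theorem MemL1Z.abs_le_ceil_mul {x : ℕ → ℤ} (hx : MemL1Z x) (j : ℕ) :
    |x j| ≤ ((⌈l1NormZ x⌉₊ * j.factorial : ℕ) : ℤ) := by
  have : (|x j| : ℝ) ≤ ⌈l1NormZ x⌉₊ * j.factorial :=
    (hx.abs_le j).trans (by gcongr; exact Nat.le_ceil _)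
  exact_mod_cast this

theorem MemL1Z.eq_zero_of_l1NormZ_lt {x : ℕ → ℤ} (hx : MemL1Z x) {N : ℕ}
    (hN : l1NormZ x < 1 / N.factorial) {j : ℕ} (hj : j ≤ N) : x j = 0 := by
  rw [← Int.abs_lt_one_iff]
  have : (|x j| : ℝ) < 1 :=
    calc (|x j| : ℝ) ≤ l1NormZ x * j.factorial := hx.abs_le j
      _ < 1 / N.factorial * j.factorial := by gcongr
      _ ≤ 1 := by
        rw [div_mul_eq_mul_div, one_mul, div_le_one (by positivity)]
        exact_mod_cast Nat.factorial_le hj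
  exact_mod_cast this

theorem MemL1Z.abs_le_factorial_of_l1NormZ_lt {x : ℕ → ℤ} (hx : MemL1Z x)
    (hlt : l1NormZ x < 1) (j : ℕ) : |x j| ≤ j.factorial := by
  have : (|x j| : ℝ) ≤ j.factorial :=
    (hx.abs_le j).trans (mul_le_of_le_one_left (by positivity) hlt.le)
  exact_mod_cast this

section Embeddings

variable {A : Type*} [AddCommGroup A] [MetricSpace A] [IsTopologicalAddGroup A] [CompleteSpace A]
  [SecondCountableTopology A]

theorem exists_zmod_embedding {p : ℕ} (hp : p.Prime) (hT : ¬ {c : A | p • c = 0}.Countable) :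
    ∃ f : (ℕ → ZMod p) →+ A, Continuous f ∧ Function.Injective f := by
  have : Fact p.Prime := ⟨hp⟩
  have : DiscreteTopology (ZMod p) := ⟨rfl⟩
  set T := (nsmulAddMonoidHom (α := A) p).ker
  have hTunc : ¬ (T : Set A).Countable := by
    convert hT using 2
    ext c
    simp [T]
  obtain ⟨a, ha⟩ := exists_isSeriesEmbedding hTunc forall_zsmul_eq_zero_or_countable_ker_nsmul
    (β := fun _ _ => p) monotone_const
  have hbdd (x : ℕ → ZMod p) (j : ℕ) : |((x j).val : ℤ)| ≤ p := by
    rw [abs_of_nonneg (by positivity)]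
    exact_mod_cast (x j).val_lt.le
  let f : (ℕ → ZMod p) →+ A := AddMonoidHom.mk' (fun x => seriesSum a fun j => (x j).val)
    fun x y => by
      rw [← seriesSum_add ⟨_, ha.tendsto (b := 0) (hbdd x)⟩ ⟨_, ha.tendsto (b := 0) (hbdd y)⟩]
      exact seriesSum_congr fun j => zsmul_val_add (by simpa [T] using ha.mem j) _ _
  refine ⟨f, continuous_of_continuousAt_zero f ?_, (injective_iff_map_eq_zero f).2 fun x hx => ?_⟩
  · rw [ContinuousAt, map_zero, (𝓝 (0 : A)).basis_sets.tendsto_right_iff]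
    intro U hU
    obtain ⟨N, hN⟩ := ha.seriesSum_mem U hU 0
    have hzero (j : ℕ) : ∀ᶠ y in 𝓝 (0 : ℕ → ZMod p), y j = 0 :=
      (continuous_apply j).continuousAt.preimage_mem_nhds ((isOpen_discrete {0}).mem_nhds rfl)
    filter_upwards [(eventually_all_finset (range N)).2 fun j _ => hzero j] with y hy
    exact hN _ (hbdd y) fun j hj => by simp [hy j (mem_range.2 hj)]
  · obtain ⟨c, hcT, hc0⟩ : ((T : Set A) \ {0}).Nonempty :=
      Set.sdiff_nonempty.2 fun h => hTunc ((Set.countable_singleton 0).mono h)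
    funext j
    have hpj := natCast_dvd_of_zsmul_eq_zero (by simpa [T] using hcT) hc0
      (ha.zsmul_eq_zero (b := 0) (hbdd x) hx j c hcT)
    rw [Pi.zero_apply, ← ZMod.val_eq_zero]
    exact Nat.eq_zero_of_dvd_of_lt (Int.natCast_dvd_natCast.1 hpj) (x j).val_lt

theorem exists_l1Z_embedding (hA : ¬ Countable A)
    (htor : ∀ n : ℕ, n ≠ 0 → {c : A | n • c = 0}.Countable) :
    ∃ f : {x : ℕ → ℤ // MemL1Z x} → A,
      (∀ (x y : {x : ℕ → ℤ // MemL1Z x}) (h : MemL1Z (x.1 + y.1)),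
        f ⟨x.1 + y.1, h⟩ = f x + f y) ∧
      Function.Injective f ∧
      (∀ x : {x : ℕ → ℤ // MemL1Z x}, ∀ U ∈ 𝓝 (f x),
        ∃ δ > 0, ∀ y : {x : ℕ → ℤ // MemL1Z x}, l1NormZ (y.1 - x.1) < δ → f y ∈ U) := by
  have hzsmul {m : ℤ} (hm : ∀ c : A, m • c = 0) : m = 0 := by
    by_contra hm0
    refine hA (countable_univ_iff.1 ((htor _ (Int.natAbs_ne_zero.2 hm0)).mono fun c _ => ?_))
    exact natAbs_nsmul_eq_zero.2 (hm c)
  obtain ⟨a, ha⟩ := exists_isSeriesEmbedding (T := ⊤) (by simpa [countable_univ_iff] using hA)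
    (forall_zsmul_eq_zero_or_countable_top htor) (β := fun k j => k * j.factorial)
    fun k k' h j => Nat.mul_le_mul_right _ h
  have hadd {x y : ℕ → ℤ} (hx : MemL1Z x) (hy : MemL1Z y) :
      seriesSum a (x + y) = seriesSum a x + seriesSum a y :=
    seriesSum_add ⟨_, ha.tendsto hx.abs_le_ceil_mul⟩ ⟨_, ha.tendsto hy.abs_le_ceil_mul⟩
  have hsub {x y : ℕ → ℤ} (hx : MemL1Z x) (hy : MemL1Z y) :
      seriesSum a x = seriesSum a y + seriesSum a (x - y) := by
    rw [← hadd hy (hx.sub hy), add_sub_cancel]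
  refine ⟨fun x => seriesSum a x.1, fun x y _ => hadd x.2 y.2, fun x y hxy => ?_, ?_⟩
  · have h0 : seriesSum a (x.1 - y.1) = 0 := by
      simpa [hxy] using hsub x.2 y.2
    refine Subtype.ext (funext fun j => sub_eq_zero.1 (hzsmul fun c => ?_))
    exact ha.zsmul_eq_zero (x.2.sub y.2).abs_le_ceil_mul h0 j c trivial
  · intro x U hU
    have hU0 : (seriesSum a x.1 + ·) ⁻¹' U ∈ 𝓝 0 :=
      (continuous_const.add continuous_id).continuousAt.preimage_mem_nhds (by simpa using hU)
    obtain ⟨N, hN⟩ := ha.seriesSum_mem _ hU0 1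
    refine ⟨1 / N.factorial, by positivity, fun y hy => ?_⟩
    have hyx := y.2.sub x.2
    have hlt : l1NormZ (y.1 - x.1) < 1 :=
      hy.trans_le (div_le_one_of_le₀ (by exact_mod_cast N.factorial_pos) (by positivity))
    show seriesSum a y.1 ∈ U
    rw [hsub y.2 x.2]
    exact hN _ (fun j => by simpa using hyx.abs_le_factorial_of_l1NormZ_lt hlt j)
      fun j hj => hyx.eq_zero_of_l1NormZ_lt hy hj.le

end Embeddings

theorem stmt_17 (A : Type*) [AddCommGroup A] [TopologicalSpace A]
    [IsTopologicalAddGroup A] [PolishSpace A] (huncount : ¬ Countable A) :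
    -- either ℓ¹(ℤ) embeds into A by a continuous injective homomorphism:
    (∃ f : {x : ℕ → ℤ // MemL1Z x} → A,
      (∀ (x y : {x : ℕ → ℤ // MemL1Z x}) (h : MemL1Z (x.1 + y.1)),
        f ⟨x.1 + y.1, h⟩ = f x + f y) ∧
      Function.Injective f ∧
      (∀ x : {x : ℕ → ℤ // MemL1Z x}, ∀ U ∈ nhds (f x),
        ∃ δ > 0, ∀ y : {x : ℕ → ℤ // MemL1Z x},
          l1NormZ (y.1 - x.1) < δ → f y ∈ U)) ∨
    -- or (ℤ/pℤ)^ℕ embeds into A for some prime p: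
    (∃ p : ℕ, p.Prime ∧
      ∃ f : (ℕ → ZMod p) →+ A, Continuous f ∧ Function.Injective f) := by
  let := TopologicalSpace.upgradeIsCompletelyMetrizable A
  by_cases h : ∃ p : ℕ, p.Prime ∧ ¬ {c : A | p • c = 0}.Countable
  · obtain ⟨p, hp, hT⟩ := h
    exact Or.inr ⟨p, hp, exists_zmod_embedding hp hT⟩
  · push Not at h
    exact Or.inl (exists_l1Z_embedding huncount (countable_torsion_of_forall_prime h))
end
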